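/- arXiv:2301.09867 — 2 statements merged into one kernel-verified Lean document; each statement's English description precedes it below -/
import Mathlib

section
/- Let G be a graph on n vertices with minimum degree δ(G) ≥ (2/3)n − 1. Then π*_2(G) = π*(G). -/
open Finset

/-- A single pebbling move: remove two pebbles from `u` and place one on an
adjacent vertex `v`. -/
def PebblingStep {V : Type*} [DecidableEq V] (G : SimpleGraph V) (D D' : V → ℕ) : Prop :=
  ∃ u v, G.Adj u v ∧ 2 ≤ D u ∧
    D' = Function.update (Function.update D u (D u - 2)) v (D v + 1)

/-- `D'` is obtained from `D` by an executable sequence of pebbling moves. -/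
def PebblingReaches {V : Type*} [DecidableEq V] (G : SimpleGraph V) : (V → ℕ) → (V → ℕ) → Prop :=
  Relation.ReflTransGen (PebblingStep G)

/-- A vertex `v` is `k`-reachable under `D`. -/
def KReachable {V : Type*} [DecidableEq V] (G : SimpleGraph V) (D : V → ℕ) (k : ℕ) (v : V) : Prop :=
  ∃ D', PebblingReaches G D D' ∧ k ≤ D' v

/-- A distribution is solvable if every vertex is (1-)reachable. -/
def Solvable {V : Type*} [DecidableEq V] (G : SimpleGraph V) (D : V → ℕ) : Prop :=
  ∀ v, KReachable G D 1 v

/-- The size of a pebble distribution. -/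
def distSize {V : Type*} [Fintype V] (D : V → ℕ) : ℕ := ∑ v, D v

/-- The optimal pebbling number `π*`. -/
noncomputable def optPebbling {V : Type*} [Fintype V] [DecidableEq V] (G : SimpleGraph V) : ℕ :=
  sInf {n | ∃ D : V → ℕ, Solvable G D ∧ distSize D = n}

/-- The `t`-restricted optimal pebbling number `π*_t`. -/
noncomputable def optPebblingRes {V : Type*} [Fintype V] [DecidableEq V]
    (G : SimpleGraph V) (t : ℕ) : ℕ :=
  sInf {n | ∃ D : V → ℕ, (∀ v, D v ≤ t) ∧ Solvable G D ∧ distSize D = n}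

/-!
Two pebbles on a dominating vertex solve `G`, and so do two pebbles on each of two non-adjacent
vertices `a`, `b`: every other vertex `w` is adjacent to `a` or `b`, or else `a`, `b`, `w` are
pairwise non-adjacent, and then they have a common neighbour `x`, since their neighbourhoods lie
among the other `n - 3` vertices and, by the degree bound, have sizes summing to at least
`2n - 3`. Now `a` and `b` each send a pebble to `x`, which moves one on to `w`.
An optimal distribution that is not 2-restricted puts at least three pebbles on some vertex `u`;
if it has size 3 it is three pebbles on `u`, which forces `u` to dominate, and otherwise it has
size at least 4.
-/

section Reachability

variable {V : Type*} [DecidableEq V] {G : SimpleGraph V} {D D' : V → ℕ} {u : V}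

lemma KReachable.of_le {k : ℕ} {v : V} (h : k ≤ D v) : KReachable G D k v :=
  ⟨D, .refl, h⟩

lemma solvable_one : Solvable G 1 :=
  fun _ => .of_le le_rfl

lemma KReachable.one_of_adj {v : V} (hu : KReachable G D 2 u) (h : G.Adj u v) :
    KReachable G D 1 v := by
  obtain ⟨D', hD', h2⟩ := hu
  exact ⟨_, hD'.tail ⟨u, v, h, h2, rfl⟩, by simp⟩

lemma kReachable_two_of_adj_of_adj {a b x : V} (hab : a ≠ b) (ha : 2 ≤ D a) (hb : 2 ≤ D b)
    (hax : G.Adj a x) (hbx : G.Adj b x) : KReachable G D 2 x := by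
  have hD₁b : Function.update (Function.update D a (D a - 2)) x (D x + 1) b = D b := by
    simp [hbx.ne, hab.symm]
  exact ⟨_, .tail (.single ⟨a, x, hax, ha, rfl⟩) ⟨b, x, hbx, hD₁b.symm ▸ hb, rfl⟩, by simp⟩

lemma solvable_pi_single_two (hu : ∀ v, v = u ∨ G.Adj u v) : Solvable G (Pi.single u 2) := by
  have hu₂ : KReachable G (Pi.single u 2) 2 u := .of_le (by simp)
  intro v
  rcases hu v with rfl | h
  · exact .of_le (by simp)
  · exact hu₂.one_of_adj h

lemma solvable_pi_single_two_add_pi_single_two {a b : V} (hab : a ≠ b)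
    (hcommon : ∀ w, w ≠ a → w ≠ b → ¬G.Adj a w → ¬G.Adj b w →
      ∃ x, G.Adj a x ∧ G.Adj b x ∧ G.Adj w x) :
    Solvable G (Pi.single a 2 + Pi.single b 2) := by
  have ha : 2 ≤ (Pi.single a 2 + Pi.single b 2 : V → ℕ) a := by simp
  have hb : 2 ≤ (Pi.single a 2 + Pi.single b 2 : V → ℕ) b := by simp
  intro w
  by_cases hwa : w = a
  · exact .of_le (by subst hwa; omega)
  by_cases hwb : w = b
  · exact .of_le (by subst hwb; omega)
  by_cases haw : G.Adj a w
  · exact (KReachable.of_le ha).one_of_adj haw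
  by_cases hbw : G.Adj b w
  · exact (KReachable.of_le hb).one_of_adj hbw
  obtain ⟨x, hax, hbx, hwx⟩ := hcommon w hwa hwb haw hbw
  exact (kReachable_two_of_adj_of_adj hab ha hb hax hbx).one_of_adj hwx.symm

lemma pebblingReaches_pi_single_three (h : PebblingReaches G (Pi.single u 3) D') :
    D' = Pi.single u 3 ∨ ∃ v, G.Adj u v ∧ D' = Pi.single u 1 + Pi.single v 1 := by
  induction h with
  | refl => exact .inl rfl
  | tail _ hstep ih =>
    obtain ⟨p, q, hpq, hp, rfl⟩ := hstep
    rcases ih with rfl | ⟨v, huv, rfl⟩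
    · obtain rfl : p = u := by
        by_contra hpu
        simp [hpu] at hp
      refine .inr ⟨q, hpq, funext fun w => ?_⟩
      simp only [Function.update_apply, Pi.single_apply, Pi.add_apply]
      split_ifs <;> simp_all
    · simp only [Pi.add_apply, Pi.single_apply] at hp
      split_ifs at hp <;> simp_all

lemma dominates_of_solvable_pi_single_three (h : Solvable G (Pi.single u 3)) :
    ∀ v, v = u ∨ G.Adj u v := by
  intro w
  obtain ⟨D', hD', hw⟩ := h w
  rcases pebblingReaches_pi_single_three hD' with rfl | ⟨v, huv, rfl⟩
  · by_contra! hwu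
    simp [hwu.1] at hw
  · simp only [Pi.add_apply, Pi.single_apply] at hw
    split_ifs at hw <;> simp_all

end Reachability

section Counting

open SimpleGraph

variable {V : Type*} [Fintype V] [DecidableEq V] {G : SimpleGraph V} [DecidableRel G.Adj]

lemma exists_common_neighbor_of_not_adj (hd : ∀ v, 2 * Fintype.card V ≤ 3 * G.degree v + 3)
    {a b w : V} (hab : a ≠ b) (haw : a ≠ w) (hbw : b ≠ w)
    (hab' : ¬G.Adj a b) (haw' : ¬G.Adj a w) (hbw' : ¬G.Adj b w) :
    ∃ x, G.Adj a x ∧ G.Adj b x ∧ G.Adj w x := by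
  set R := univ \ {a, b, w}
  have hR : #R + 3 = Fintype.card V := by
    have h3 : #({a, b, w} : Finset V) = 3 := by
      rw [card_insert_of_notMem (by simp [hab, haw]), card_pair hbw]
    rw [← h3, card_sdiff_add_card_eq_card (subset_univ _), card_univ]
  have hN : ∀ v ∈ ({a, b, w} : Finset V), G.neighborFinset v ⊆ R := by
    intro v hv x hx
    rw [mem_neighborFinset] at hx
    simp only [R, mem_sdiff, mem_univ, true_and, mem_insert, mem_singleton] at hv ⊢
    rcases hv with rfl | rfl | rfl <;> rintro (rfl | rfl | rfl) <;> simp_all [G.adj_comm]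
  have hNa := hN a (by simp)
  have hNb := hN b (by simp)
  have hNab : #(G.neighborFinset a) + #(G.neighborFinset b) ≤
      #R + #(G.neighborFinset a ∩ G.neighborFinset b) := by
    rw [← card_union_add_card_inter]
    exact Nat.add_le_add_right (card_le_card (union_subset hNa hNb)) _
  have hda := hd a
  have hdb := hd b
  have hdw := hd w
  rw [← card_neighborFinset_eq_degree] at hda hdb hdw
  obtain ⟨x, hx⟩ := inter_nonempty_of_card_lt_card_add_card
    ((inter_subset_left (s₂ := G.neighborFinset b)).trans hNa) (hN w (by simp)) (by omega)
  simp only [mem_inter, mem_neighborFinset] at hx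
  exact ⟨x, hx.1.1, hx.1.2, hx.2⟩

end Counting

section DistSize

variable {V : Type*} [Fintype V]

lemma distSize_add (D E : V → ℕ) : distSize (D + E) = distSize D + distSize E :=
  sum_add_distrib

lemma le_distSize (D : V → ℕ) (u : V) : D u ≤ distSize D :=
  single_le_sum (fun _ _ => Nat.zero_le _) (mem_univ u)

variable [DecidableEq V]

lemma distSize_pi_single (u : V) (k : ℕ) : distSize (Pi.single u k) = k := by
  simp [distSize]

lemma eq_pi_single_of_distSize_le {D : V → ℕ} {u : V} (h : distSize D ≤ D u) :
    D = Pi.single u (D u) := by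
  have hrest : ∑ v ∈ univ.erase u, D v = 0 := by
    have := add_sum_erase univ D (mem_univ u)
    unfold distSize at h
    omega
  funext v
  by_cases hvu : v = u
  · simp [hvu]
  · simp [hvu, sum_eq_zero_iff.mp hrest v (by simp [hvu])]

end DistSize

section OptimalPebbling

variable {V : Type*} [Fintype V] [DecidableEq V] {G : SimpleGraph V} {D : V → ℕ} {t : ℕ}

lemma optPebbling_le (hD : Solvable G D) : optPebbling G ≤ distSize D :=
  Nat.sInf_le ⟨D, hD, rfl⟩

lemma optPebblingRes_le (ht : ∀ v, D v ≤ t) (hD : Solvable G D) :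
    optPebblingRes G t ≤ distSize D :=
  Nat.sInf_le ⟨D, ht, hD, rfl⟩

lemma exists_solvable_distSize_eq_optPebbling (G : SimpleGraph V) :
    ∃ D, Solvable G D ∧ distSize D = optPebbling G :=
  Nat.sInf_mem (show Set.Nonempty {n | ∃ D : V → ℕ, Solvable G D ∧ distSize D = n} from
    ⟨_, 1, solvable_one, rfl⟩)

lemma optPebbling_le_optPebblingRes (ht : 1 ≤ t) : optPebbling G ≤ optPebblingRes G t := by
  obtain ⟨D, -, hD, hsize⟩ : ∃ D : V → ℕ, (∀ v, D v ≤ t) ∧ Solvable G D ∧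
      distSize D = optPebblingRes G t :=
    Nat.sInf_mem (show Set.Nonempty {n | ∃ D : V → ℕ, (∀ v, D v ≤ t) ∧ Solvable G D ∧
      distSize D = n} from ⟨_, 1, fun _ => ht, solvable_one, rfl⟩)
  exact hsize ▸ optPebbling_le hD

lemma optPebblingRes_two_le_two_of_dominates {u : V} (hu : ∀ v, v = u ∨ G.Adj u v) :
    optPebblingRes G 2 ≤ 2 := by
  have hle : ∀ v, (Pi.single u 2 : V → ℕ) v ≤ 2 := fun v => by
    by_cases hvu : v = u <;> simp [hvu]
  simpa [distSize_pi_single] using optPebblingRes_le hle (solvable_pi_single_two hu)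

lemma optPebblingRes_two_le_four [DecidableRel G.Adj]
    (hd : ∀ v, 2 * Fintype.card V ≤ 3 * G.degree v + 3) (u : V) : optPebblingRes G 2 ≤ 4 := by
  by_cases hu : ∀ v, v = u ∨ G.Adj u v
  · exact (optPebblingRes_two_le_two_of_dominates hu).trans (by norm_num)
  obtain ⟨b, hbu, hub⟩ : ∃ b, b ≠ u ∧ ¬G.Adj u b := by simpa only [not_forall, not_or] using hu
  have hle : ∀ v, (Pi.single u 2 + Pi.single b 2 : V → ℕ) v ≤ 2 := fun v => by
    simp only [Pi.add_apply, Pi.single_apply]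
    split_ifs <;> simp_all
  have hsolv := solvable_pi_single_two_add_pi_single_two hbu.symm
    fun w hwu hwb huw hbw => exists_common_neighbor_of_not_adj hd hbu.symm (Ne.symm hwu)
      (Ne.symm hwb) hub huw hbw
  simpa [distSize_add, distSize_pi_single] using optPebblingRes_le hle hsolv

end OptimalPebbling

theorem restricted_eq_of_large_minDegree {V : Type*} [Fintype V] [DecidableEq V]
    (G : SimpleGraph V) [DecidableRel G.Adj]
    (hδ : (2 : ℚ) / 3 * Fintype.card V - 1 ≤ G.minDegree) :
    optPebblingRes G 2 = optPebbling G := by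
  have hd : ∀ v, 2 * Fintype.card V ≤ 3 * G.degree v + 3 := fun v => by
    have : (G.minDegree : ℚ) ≤ G.degree v := by exact_mod_cast G.minDegree_le_degree v
    exact_mod_cast (by linarith : (2 * Fintype.card V : ℚ) ≤ 3 * G.degree v + 3)
  refine le_antisymm ?_ (optPebbling_le_optPebblingRes one_le_two)
  obtain ⟨D, hD, hsize⟩ := exists_solvable_distSize_eq_optPebbling G
  by_cases hD₂ : ∀ v, D v ≤ 2
  · exact hsize ▸ optPebblingRes_le hD₂ hD
  obtain ⟨u, hu⟩ := not_forall.mp hD₂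
  have hDu := le_distSize D u
  by_cases h4 : 4 ≤ optPebbling G
  · exact (optPebblingRes_two_le_four hd u).trans h4
  have hD₃ : D = Pi.single u 3 := by
    have := eq_pi_single_of_distSize_le (D := D) (u := u) (by omega)
    rwa [show D u = 3 by omega] at this
  rw [hD₃] at hD
  exact (optPebblingRes_two_le_two_of_dominates (dominates_of_solvable_pi_single_three hD)).trans
    (by omega)
end

section
/- Let G be a connected graph on 4 vertices. Then there exist two vertices x, y (the endpoints of a longest path) such that placing 2 pebbles on each of x and y yields a solvable distribution; hence π*_2(G) ≤ 4. -/
open Finset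

/-!
Any connected graph on at least three vertices contains a path `x - w - y`. Put two pebbles on
each of `x` and `y`. Then `x`, `y` and every neighbour of `x` or `y` (in particular `w`) receive a
pebble in at most one move, and two moves bring two pebbles to `w`, from where one more move
reaches every neighbour of `w`. On four vertices the only remaining vertex has a neighbour among
`x`, `y`, `w`, so the distribution, of size `4`, is solvable.
-/

namespace SimpleGraph

variable {V : Type*} {G : SimpleGraph V}

theorem exists_adj_adj_of_two_lt_card [Fintype V] (hconn : G.Connected)
    (hcard : 2 < Fintype.card V) : ∃ x y w, x ≠ y ∧ G.Adj x w ∧ G.Adj y w := by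
  by_cases hcomplete : ∀ u v, u ≠ v → G.Adj u v
  · obtain ⟨a, b, c, hab, hac, hbc⟩ := Fintype.two_lt_card_iff.mp hcard
    exact ⟨a, b, c, hab, hcomplete _ _ hac, hcomplete _ _ hbc⟩
  · push Not at hcomplete
    obtain ⟨u, v, huv, hnadj⟩ := hcomplete
    obtain ⟨p, hp⟩ := hconn.exists_walk_length_eq_dist u v
    obtain ⟨x, w, y, hxw, hwy, -, hxy⟩ :=
      p.exists_adj_adj_not_adj_ne hp (hconn.one_lt_dist_of_ne_of_not_adj huv hnadj)
    exact ⟨x, y, w, hxy, hxw, hwy.symm⟩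

end SimpleGraph

theorem Finset.mem_of_ne_of_notMem_of_card_add_one_eq {α : Type*} [Fintype α] [DecidableEq α]
    {s : Finset α} {a b : α} (hs : #s + 1 = Fintype.card α) (ha : a ∉ s) (hba : b ≠ a) :
    b ∈ s := by
  have huniv : insert a s = univ := eq_univ_of_card _ (by rw [card_insert_of_notMem ha, hs])
  simpa [hba] using (huniv ▸ mem_univ b : b ∈ insert a s)

section Pebbling

variable {V : Type*} [DecidableEq V] {G : SimpleGraph V} {D : V → ℕ} {k : ℕ} {u v w x y : V}

theorem kReachable_of_le (h : k ≤ D v) : KReachable G D k v :=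
  ⟨D, .refl, h⟩

theorem KReachable.of_adj (h : KReachable G D 2 u) (hadj : G.Adj u v) : KReachable G D 1 v := by
  obtain ⟨D', hreach, hu⟩ := h
  exact ⟨_, hreach.tail ⟨u, v, hadj, hu, rfl⟩, by simp⟩

theorem kReachable_two_of_adj_adj (hxy : x ≠ y) (hxw : G.Adj x w) (hyw : G.Adj y w)
    (hx : 2 ≤ D x) (hy : 2 ≤ D y) : KReachable G D 2 w := by
  set D₁ := Function.update (Function.update D x (D x - 2)) w (D w + 1)
  have hD₁y : D₁ y = D y := by simp [D₁, hxy.symm, hyw.ne]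
  refine ⟨Function.update (Function.update D₁ y (D₁ y - 2)) w (D₁ w + 1),
    (Relation.ReflTransGen.single ⟨x, w, hxw, hx, rfl⟩).tail ⟨y, w, hyw, by omega, rfl⟩, ?_⟩
  simp [D₁]

theorem solvable_of_adj_adj [Fintype V] (hconn : G.Connected) (hcard : Fintype.card V = 4)
    (hxy : x ≠ y) (hxw : G.Adj x w) (hyw : G.Adj y w) (hx : 2 ≤ D x) (hy : 2 ≤ D y) :
    Solvable G D := by
  have hx₂ : KReachable G D 2 x := kReachable_of_le hx
  have hy₂ : KReachable G D 2 y := kReachable_of_le hy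
  have hw₂ : KReachable G D 2 w := kReachable_two_of_adj_adj hxy hxw hyw hx hy
  intro v
  by_cases hv : v ∈ ({x, y, w} : Finset V)
  · simp only [mem_insert, mem_singleton] at hv
    rcases hv with rfl | rfl | rfl
    · exact kReachable_of_le (by omega)
    · exact kReachable_of_le (by omega)
    · exact hx₂.of_adj hxw
  · have : Nontrivial V := nontrivial_of_ne x y hxy
    obtain ⟨u, hvu⟩ := hconn.preconnected.exists_adj_of_nontrivial v
    have hcard₃ : #({x, y, w} : Finset V) + 1 = Fintype.card V := by
      rw [card_eq_three.mpr ⟨x, y, w, hxy, hxw.ne, hyw.ne, rfl⟩, hcard]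
    have hu := mem_of_ne_of_notMem_of_card_add_one_eq hcard₃ hv hvu.ne.symm
    simp only [mem_insert, mem_singleton] at hu
    rcases hu with rfl | rfl | rfl
    · exact hx₂.of_adj hvu.symm
    · exact hy₂.of_adj hvu.symm
    · exact hw₂.of_adj hvu.symm

end Pebbling

theorem distSize_ite_eq_or_eq {V : Type*} [Fintype V] [DecidableEq V] {x y : V} (hxy : x ≠ y) :
    distSize (fun v => if v = x ∨ v = y then 2 else 0) = 4 := by
  simp [distSize, sum_ite, filter_or, filter_eq', card_pair hxy]

theorem optPebblingRes_le_distSize {V : Type*} [Fintype V] [DecidableEq V] {G : SimpleGraph V}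
    {D : V → ℕ} {t : ℕ} (hD : ∀ v, D v ≤ t) (hsolv : Solvable G D) :
    optPebblingRes G t ≤ distSize D :=
  Nat.sInf_le ⟨D, hD, hsolv, rfl⟩

theorem four_vertex_connected_two_two {V : Type*} [Fintype V] [DecidableEq V]
    (G : SimpleGraph V) (hconn : G.Connected) (hcard : Fintype.card V = 4) :
    (∃ x y : V, x ≠ y ∧ Solvable G (fun v => if v = x ∨ v = y then 2 else 0)) ∧
    optPebblingRes G 2 ≤ 4 := by
  obtain ⟨x, y, w, hxy, hxw, hyw⟩ := G.exists_adj_adj_of_two_lt_card hconn (by omega)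
  set D : V → ℕ := fun v => if v = x ∨ v = y then 2 else 0
  have hsolv : Solvable G D :=
    solvable_of_adj_adj hconn hcard hxy hxw hyw (by simp [D]) (by simp [D])
  refine ⟨⟨x, y, hxy, hsolv⟩, ?_⟩
  calc optPebblingRes G 2 ≤ distSize D := optPebblingRes_le_distSize (fun v => by grind) hsolv
    _ = 4 := distSize_ite_eq_or_eq hxy
end
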